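/- Let n be a natural number and x : Fin n → Bool an assignment to propositional variables x_1,…,x_n. Then the following are equivalent: (a) some x_i is true AND there exists an assignment s : Fin (n+1) → Bool with s_0 = false such that for every i with 1 ≤ i ≤ n the three clauses (¬s_{i−1} ∨ s_i), (¬s_{i−1} ∨ ¬x_i), and (s_{i−1} ∨ ¬x_i ∨ s_i) are all satisfied; (b) exactly one of x_1,…,x_n is true, i.e. the cardinality of {i : x_i = true} equals 1. -/

import Mathlib

/-!
A satisfying `s` of the sequential clauses is monotone, is `false` just before every true `x_i`
and `true` just after it; so two true inputs `x_i`, `x_j` with `i < j` would force `s_{j-1}` to be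
both `true` and `false`. Conversely, when at most one `x_i` is true, the prefix disjunctions
`s_k = x_1 ∨ ⋯ ∨ x_k` satisfy all the clauses.
-/

namespace SequentialAMO

variable {n : ℕ}

def IsWitness (x : Fin n → Bool) (s : Fin (n + 1) → Bool) : Prop :=
  s 0 = false ∧
    ∀ i : Fin n,
      ((!(s i.castSucc) || s i.succ) = true ∧
       (!(s i.castSucc) || !(x i)) = true ∧
       (s i.castSucc || !(x i) || s i.succ) = true)

namespace IsWitness

variable {x : Fin n → Bool} {s : Fin (n + 1) → Bool}

theorem monotone (hs : IsWitness x s) : Monotone s :=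
  Fin.monotone_iff_le_succ.2 fun i => Bool.le_iff_imp.2 fun h => by
    simpa [h] using (hs.2 i).1

theorem castSucc_eq_false {i : Fin n} (hs : IsWitness x s) (hx : x i = true) :
    s i.castSucc = false := by
  simpa [hx] using (hs.2 i).2.1

theorem succ_eq_true {i : Fin n} (hs : IsWitness x s) (hx : x i = true) :
    s i.succ = true := by
  simpa [hx, hs.castSucc_eq_false hx] using (hs.2 i).2.2

theorem not_lt_of_eq_true (hs : IsWitness x s) {i j : Fin n} (hi : x i = true)
    (hj : x j = true) : ¬i < j := fun hij => by
  have hsj : s j.castSucc = true :=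
    Bool.le_iff_imp.1 (hs.monotone (Fin.le_def.2 hij : i.succ ≤ j.castSucc)) (hs.succ_eq_true hi)
  simp [hs.castSucc_eq_false hj] at hsj

theorem eq_of_eq_true (hs : IsWitness x s) {i j : Fin n} (hi : x i = true) (hj : x j = true) :
    i = j :=
  le_antisymm (not_lt.1 (hs.not_lt_of_eq_true hj hi)) (not_lt.1 (hs.not_lt_of_eq_true hi hj))

end IsWitness

def prefixOr (x : Fin n → Bool) (k : Fin (n + 1)) : Bool :=
  decide (∃ i : Fin n, i.castSucc < k ∧ x i = true)

theorem isWitness_prefixOr {x : Fin n → Bool}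
    (hx : ∀ {i j : Fin n}, x i = true → x j = true → i = j) :
    IsWitness x (prefixOr x) := by
  refine ⟨by simp [prefixOr], fun i => ?_⟩
  simp only [prefixOr, Bool.or_eq_true, Bool.not_eq_true', decide_eq_false_iff_not,
    decide_eq_true_eq, not_exists, not_and, Fin.castSucc_lt_castSucc_iff, Fin.castSucc_lt_succ_iff]
  refine ⟨?_, ?_, ?_⟩
  · by_cases h : ∃ j < i, x j = true
    · obtain ⟨j, hji, hj⟩ := h
      exact Or.inr ⟨j, hji.le, hj⟩
    · exact Or.inl fun j hji hj => h ⟨j, hji, hj⟩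
  · exact (Bool.eq_false_or_eq_true (x i)).imp_left fun hi j hji hj => hji.ne (hx hj hi)
  · exact (Bool.eq_false_or_eq_true (x i)).elim (fun hi => Or.inr ⟨i, le_rfl, hi⟩)
      (Or.inl ∘ Or.inr)

theorem exists_isWitness_iff (x : Fin n → Bool) :
    (∃ s, IsWitness x s) ↔ (Finset.univ.filter fun i : Fin n => x i = true).card ≤ 1 := by
  simp only [Finset.card_le_one, Finset.mem_filter, Finset.mem_univ, true_and]
  exact ⟨fun ⟨_, hs⟩ _ hi _ hj => hs.eq_of_eq_true hi hj,
    fun hx => ⟨_, isWitness_prefixOr (hx _ · _ ·)⟩⟩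

end SequentialAMO

/-- The exactly-one (EO) encoding is correct: some `x_i` is true and the
sequential at-most-one encoding is satisfiable for `x`, if and only if
exactly one of the `x_i` is true. -/
theorem eo_encoding_correct (n : ℕ) (x : Fin n → Bool) :
    ((∃ i : Fin n, x i = true) ∧
      ∃ s : Fin (n + 1) → Bool,
        s 0 = false ∧
        ∀ i : Fin n,
          ((!(s i.castSucc) || s i.succ) = true ∧
           (!(s i.castSucc) || !(x i)) = true ∧
           (s i.castSucc || !(x i) || s i.succ) = true)) ↔
    (Finset.univ.filter fun i : Fin n => x i = true).card = 1 := by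
  have hex : (∃ i, x i = true) ↔ 0 < (Finset.univ.filter fun i : Fin n => x i = true).card := by
    simp [Finset.card_pos, Finset.filter_nonempty_iff]
  exact (and_congr hex (SequentialAMO.exists_isWitness_iff x)).trans (by omega)
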